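/- Let c ∈ (0,1), let f be a normalized exterior slit map of capacity c, and let g : f(Δ) → Δ be the holomorphic inverse of f (so g ∘ f = id on Δ). Then for every w ∈ f(Δ), |g'(w)| = (|g(w)|/|w|) · |w − 1| / |(w+1)² − 4·e^c·w|^{1/2}. -/

import Mathlib

/-- The exterior unit disc `Δ = {z : |z| > 1}`. -/
def ExtDisc : Set ℂ := {z : ℂ | 1 < ‖z‖}

/-- A normalized exterior slit map of capacity `c` (with slit length `d`): a function
holomorphic and injective on `Δ`, with image `Δ` minus the radial slit `(1, 1+d]`,
satisfying `f(z)/z → e^c` as `|z| → ∞`, and continuous on `{|z| ≥ 1}` (we regard `f`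
as its continuous extension to the closed exterior disc). -/
def IsSlitMap (c d : ℝ) (f : ℂ → ℂ) : Prop :=
  ContinuousOn f {z : ℂ | 1 ≤ ‖z‖} ∧
  DifferentiableOn ℂ f ExtDisc ∧
  Set.InjOn f ExtDisc ∧
  f '' ExtDisc = ExtDisc \ {w : ℂ | ∃ x : ℝ, 1 < x ∧ x ≤ 1 + d ∧ w = (x : ℂ)} ∧
  Filter.Tendsto (fun z : ℂ => f z / z) (Filter.comap (fun z : ℂ => ‖z‖) Filter.atTop)
    (nhds ((Real.exp c : ℝ) : ℂ))

/-!
Put `J(z) = z + 2 + z⁻¹ = (z + 1)² / z`. On the unit circle `J` is real, and so is `J ∘ f`,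
because `f` sends the circle into the circle and the slit. Hence `h = J ∘ f - e^c J` is
holomorphic on `Δ`, real on `|z| = 1` and `o(z)` at infinity; via `ζ ↦ h(1/ζ)`, the removable
singularity theorem and the maximum principle for `Im h`, it is a real constant `a`. The constant
vanishes: otherwise some real `x ∈ Δ` has `J(f x) = 0` or `J(f x) = 4e^c = J(1 + d)`, forcing
`f x = -1` or `f x = 1 + d`, neither of which lies in `f(Δ)`. Differentiating `J(f z) = e^c J(z)`
and inverting gives `g'(w)`; the formula is its modulus, simplified with
`(w + 1)² - 4e^c w = e^c w (z - 1)² / z` for `w = f z`.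
-/
open Complex Filter Set Metric Topology Bornology

theorem apply_notMem_image_of_mem_closure {X Y : Type*} [TopologicalSpace X] [T2Space X]
    [TopologicalSpace Y] {f : X → Y} {U : Set X} {x : X} (hU : IsOpen U)
    (hopen : ∀ V ⊆ U, IsOpen V → IsOpen (f '' V)) (hinj : InjOn f U)
    (hf : ContinuousWithinAt f U x) (hx : x ∈ closure U) (hxU : x ∉ U) : f x ∉ f '' U := by
  rintro ⟨y, hy, hfy⟩
  obtain ⟨Vx, Vy, hVx, hVy, hxVx, hyVy, hdisj⟩ := t2_separation (ne_of_mem_of_not_mem hy hxU).symm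
  have hV : IsOpen (f '' (Vy ∩ U)) := hopen _ inter_subset_right (hVy.inter hU)
  have : NeBot (𝓝[U] x) := mem_closure_iff_nhdsWithin_neBot.1 hx
  obtain ⟨z, ⟨v, hv, hfv⟩, hzVx, hzU⟩ := ((hf.eventually (hV.mem_nhds ⟨y, ⟨hyVy, hy⟩, hfy⟩)).and
    ((eventually_nhdsWithin_of_eventually_nhds (hVx.eventually_mem hxVx)).and
      self_mem_nhdsWithin)).exists
  exact hdisj.ne_of_mem hzVx hv.1 (hinj hzU hv.2 hfv.symm)

theorem DifferentiableOn.isOpen_image_of_injOn {f : ℂ → ℂ} {U V : Set ℂ} (hU : IsOpen U)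
    (hf : DifferentiableOn ℂ f U) (hinj : InjOn f U) (hV : V ⊆ U) (hVo : IsOpen V) :
    IsOpen (f '' V) := by
  refine isOpen_iff_mem_nhds.2 ?_
  rintro _ ⟨z, hz, rfl⟩
  have hzU := hV hz
  refine ((hf.analyticAt (hU.mem_nhds hzU)).eventually_constant_or_nhds_le_map_nhds.resolve_left
    fun hconst => ?_) (image_mem_map (hVo.mem_nhds hz))
  have hnear : ∀ᶠ w in 𝓝[≠] z, w = z ∧ w ≠ z :=
    ((hconst.and (hU.mem_nhds hzU)).filter_mono nhdsWithin_le_nhds |>.mono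
      fun w hw => hinj hw.2 hzU hw.1).and self_mem_nhdsWithin
  obtain ⟨w, hwz, hwz'⟩ := hnear.exists
  exact hwz' hwz

theorem deriv_comp_mul_deriv_eq_one {𝕜 : Type*} [NontriviallyNormedField 𝕜] {f g : 𝕜 → 𝕜}
    {z : 𝕜} (hinv : ∀ᶠ x in 𝓝 z, g (f x) = x) (hg : DifferentiableAt 𝕜 g (f z))
    (hf : DifferentiableAt 𝕜 f z) : deriv g (f z) * deriv f z = 1 :=
  ((hasDerivAt_id z).congr_of_eventuallyEq hinv).unique (hg.hasDerivAt.comp z hf.hasDerivAt) |>.symm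

theorem DiffContOnCl.im_le_of_forall_mem_frontier_im_le {H : ℂ → ℂ} {U : Set ℂ}
    (hU : IsBounded U) (hH : DiffContOnCl ℂ H U) {C : ℝ} (hC : ∀ z ∈ frontier U, (H z).im ≤ C)
    {z : ℂ} (hz : z ∈ closure U) : (H z).im ≤ C := by
  have hnorm : ∀ w, ‖cexp (-I * H w)‖ = Real.exp (H w).im := fun w => by simp [norm_exp]
  have hexp : DiffContOnCl ℂ (fun w => cexp (-I * H w)) U :=
    Differentiable.comp_diffContOnCl (g := H) (f := fun w => cexp (-I * w)) (by fun_prop) hH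
  have := norm_le_of_forall_mem_frontier_norm_le hU hexp (C := Real.exp C)
    (fun w hw => by rw [hnorm]; exact Real.exp_le_exp.2 (hC w hw)) hz
  rwa [hnorm, Real.exp_le_exp] at this

theorem DiffContOnCl.exists_eq_ofReal_of_im_eq_zero {H : ℂ → ℂ} {U : Set ℂ}
    (hU : IsBounded U) (hUo : IsOpen U) (hUc : IsConnected U) (hH : DiffContOnCl ℂ H U)
    (hfr : ∀ z ∈ frontier U, (H z).im = 0) : ∃ a : ℝ, ∀ z ∈ U, H z = a := by
  have him : ∀ z ∈ U, (H z).im = 0 := by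
    intro z hz
    have hle := hH.im_le_of_forall_mem_frontier_im_le hU (fun w hw => (hfr w hw).le)
      (subset_closure hz)
    have hge := hH.neg.im_le_of_forall_mem_frontier_im_le hU (C := 0)
      (fun w hw => by simp [hfr w hw]) (subset_closure hz)
    simp only [Pi.neg_apply, neg_im, neg_nonpos] at hge
    exact le_antisymm hle hge
  obtain ⟨c, hc⟩ := (hH.differentiableOn.analyticOnNhd hUo).eq_const_of_im_eq_const him hUo hUc
  obtain ⟨z₀, hz₀⟩ := hUc.nonempty
  refine ⟨c.re, fun z hz => ?_⟩
  rw [hc z hz]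
  refine Complex.ext rfl ?_
  simp [← hc z₀ hz₀, him z₀ hz₀]

theorem isOpen_extDisc : IsOpen ExtDisc :=
  isOpen_lt continuous_const continuous_norm

theorem ne_zero_of_mem_extDisc {z : ℂ} (hz : z ∈ ExtDisc) : z ≠ 0 := by
  rintro rfl
  simp [ExtDisc] at hz
  linarith

theorem sq_ne_one_of_mem_extDisc {z : ℂ} (hz : z ∈ ExtDisc) : z ^ 2 ≠ 1 := by
  intro h
  have := congrArg norm h
  rw [norm_pow, norm_one] at this
  have hz' : 1 < ‖z‖ := hz
  nlinarith

theorem closure_extDisc : closure ExtDisc = {z : ℂ | 1 ≤ ‖z‖} := by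
  have : ExtDisc = (closedBall (0 : ℂ) 1)ᶜ := by ext; simp [ExtDisc]
  rw [this, closure_compl, interior_closedBall _ one_ne_zero]
  ext; simp

theorem inv_mem_extDisc {ζ : ℂ} (hζ : ζ ∈ ball (0 : ℂ) 1 \ {0}) : ζ⁻¹ ∈ ExtDisc := by
  have h0 : ζ ≠ 0 := hζ.2
  simpa [ExtDisc, norm_inv] using one_lt_inv₀ (norm_pos_iff.2 h0) |>.2 (mem_ball_zero_iff.1 hζ.1)

theorem one_le_norm_inv {ζ : ℂ} (hζ : ζ ∈ closedBall (0 : ℂ) 1 \ {0}) : 1 ≤ ‖ζ⁻¹‖ := by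
  rw [norm_inv]
  exact (one_le_inv₀ (norm_pos_iff.2 hζ.2)).2 (mem_closedBall_zero_iff.1 hζ.1)

section Exterior

variable {h : ℂ → ℂ}

noncomputable def invChart (h : ℂ → ℂ) : ℂ → ℂ :=
  Function.update (fun ζ => h ζ⁻¹) 0 (limUnder (𝓝[≠] 0) fun ζ => h ζ⁻¹)

theorem diffContOnCl_invChart (hcont : ContinuousOn h {z | 1 ≤ ‖z‖})
    (hdiff : DifferentiableOn ℂ h ExtDisc)
    (hgrowth : Tendsto (fun z => h z / z) (cobounded ℂ) (𝓝 0)) :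
    DiffContOnCl ℂ (invChart h) (ball 0 1) := by
  set q : ℂ → ℂ := fun ζ => h ζ⁻¹
  have hqd : DifferentiableOn ℂ q (ball 0 1 \ {0}) :=
    hdiff.comp (differentiableOn_inv.mono fun ζ hζ => hζ.2) fun ζ hζ => inv_mem_extDisc hζ
  have hqo : q =o[𝓝[≠] 0] fun ζ => ζ⁻¹ :=
    Asymptotics.isLittleO_of_tendsto' (eventually_mem_nhdsWithin.mono fun ζ hζ h0 =>
      absurd (inv_eq_zero.1 h0) hζ) <| by
      simpa [q, Function.comp_def] using hgrowth.comp tendsto_inv₀_nhdsNE_zero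
  have hconst : (fun _ => q 0) =o[𝓝[≠] (0 : ℂ)] fun ζ => ζ⁻¹ :=
    Asymptotics.isLittleO_const_left.2 <| .inr <|
      tendsto_norm_cobounded_atTop.comp tendsto_inv₀_nhdsNE_zero
  have hHd : DifferentiableOn ℂ (invChart h) (ball 0 1) :=
    differentiableOn_update_limUnder_of_isLittleO (ball_mem_nhds 0 one_pos) hqd
      (by simpa [q] using hqo.sub hconst)
  refine DiffContOnCl.mk_ball hHd fun ζ hζ => ?_
  rcases eq_or_ne ζ 0 with rfl | h0
  · exact (hHd.continuousOn.continuousAt (ball_mem_nhds 0 one_pos)).continuousWithinAt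
  have hq : ContinuousWithinAt q (closedBall 0 1 \ {0}) ζ :=
    (hcont _ (one_le_norm_inv ⟨hζ, h0⟩)).comp (continuousAt_inv₀ h0).continuousWithinAt
      fun ξ hξ => one_le_norm_inv hξ
  rw [← continuousWithinAt_sdiff_singleton (y := 0)]
  exact hq.congr (fun ξ hξ => Function.update_of_ne hξ.2 _ _) (Function.update_of_ne h0 _ _)

theorem exists_eq_ofReal_on_extDisc (hcont : ContinuousOn h {z | 1 ≤ ‖z‖})
    (hdiff : DifferentiableOn ℂ h ExtDisc) (him : ∀ z, ‖z‖ = 1 → (h z).im = 0)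
    (hgrowth : Tendsto (fun z => h z / z) (cobounded ℂ) (𝓝 0)) :
    ∃ a : ℝ, ∀ z ∈ ExtDisc, h z = a := by
  obtain ⟨a, ha⟩ := (diffContOnCl_invChart hcont hdiff hgrowth).exists_eq_ofReal_of_im_eq_zero
    isBounded_ball isOpen_ball (isConnected_ball one_pos) fun ζ hζ => by
      rw [frontier_ball 0 one_ne_zero, mem_sphere_zero_iff_norm] at hζ
      have h0 : ζ ≠ 0 := by rintro rfl; simp at hζ
      simpa [invChart, Function.update_of_ne h0] using him ζ⁻¹ (by simp [hζ])
  refine ⟨a, fun z hz => ?_⟩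
  have hmem : z⁻¹ ∈ ball (0 : ℂ) 1 := by
    rw [mem_ball_zero_iff, norm_inv]
    exact inv_lt_one_of_one_lt₀ hz
  simpa [invChart, Function.update_of_ne (inv_ne_zero (ne_zero_of_mem_extDisc hz))] using
    ha z⁻¹ hmem

end Exterior

noncomputable def joukowski (z : ℂ) : ℂ := z + 2 + z⁻¹

theorem joukowski_ofReal (x : ℝ) : joukowski x = ((x + 2 + x⁻¹ : ℝ) : ℂ) := by
  simp [joukowski]

theorem im_joukowski_of_norm_eq_one {z : ℂ} (hz : ‖z‖ = 1) : (joukowski z).im = 0 := by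
  simp [joukowski, inv_eq_conj hz]

theorem hasDerivAt_joukowski {z : ℂ} (hz : z ≠ 0) :
    HasDerivAt joukowski (1 - (z ^ 2)⁻¹) z := by
  have := ((hasDerivAt_id' z).add_const 2).add (hasDerivAt_inv hz)
  rw [← sub_eq_add_neg] at this
  exact this

theorem differentiableOn_joukowski : DifferentiableOn ℂ joukowski {0}ᶜ :=
  fun _ hz => (hasDerivAt_joukowski hz).differentiableAt.differentiableWithinAt

theorem eq_or_mul_eq_one_of_joukowski_eq {w z : ℂ} (hw : w ≠ 0) (hz : z ≠ 0)
    (h : joukowski w = joukowski z) : w = z ∨ w * z = 1 := by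
  have : (w - z) * (w * z - 1) = 0 := by
    unfold joukowski at h
    field_simp at h
    linear_combination h
  rcases mul_eq_zero.1 this with h | h
  · exact .inl (sub_eq_zero.1 h)
  · exact .inr (sub_eq_zero.1 h)

theorem joukowski_ne_zero {w : ℂ} (hw : w ∈ ExtDisc) : joukowski w ≠ 0 := by
  intro h
  have h' : joukowski w = joukowski (-1) := by rw [h]; simp [joukowski]; norm_num
  rcases eq_or_mul_eq_one_of_joukowski_eq (ne_zero_of_mem_extDisc hw) (by norm_num) h' with h | h
  · simp [ExtDisc, h] at hw
  · simp [ExtDisc, show w = -1 by linear_combination -h] at hw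

theorem exists_joukowski_eq {t : ℝ} (ht : t < 0 ∨ 4 < t) :
    ∃ x : ℝ, (x : ℂ) ∈ ExtDisc ∧ joukowski x = t := by
  have hdisc : 0 < t * (t - 4) := by rcases ht with ht | ht <;> nlinarith
  set s := √(t * (t - 4))
  have hs : s ^ 2 = t * (t - 4) := Real.sq_sqrt hdisc.le
  have hs0 : 0 < s := Real.sqrt_pos.2 hdisc
  have hroot : ∀ x : ℝ, x ^ 2 + (2 - t) * x + 1 = 0 → 1 < |x| →
      (x : ℂ) ∈ ExtDisc ∧ joukowski x = t := by
    intro x hx hx1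
    have hx0 : x ≠ 0 := by rintro rfl; simp at hx1; linarith
    refine ⟨by simpa [ExtDisc] using hx1, ?_⟩
    rw [joukowski_ofReal]
    congr 1
    field_simp
    linear_combination hx
  rcases ht with ht | ht
  · exact ⟨_, hroot ((t - 2 - s) / 2) (by linear_combination hs / 4)
      (by rw [abs_of_neg (by nlinarith)]; nlinarith)⟩
  · exact ⟨_, hroot ((t - 2 + s) / 2) (by linear_combination hs / 4)
      (by rw [abs_of_pos (by nlinarith)]; nlinarith)⟩

def radialSlit (d : ℝ) : Set ℂ := {w : ℂ | ∃ x : ℝ, 1 < x ∧ x ≤ 1 + d ∧ w = (x : ℂ)}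

theorem joukowski_ne_of_notMem_radialSlit {c d : ℝ} (hd : 0 < d)
    (hdc : (d + 2) ^ 2 / (d + 1) = 4 * Real.exp c) {w : ℂ} (hw : w ∈ ExtDisc \ radialSlit d) :
    joukowski w ≠ 4 * Real.exp c := by
  intro h
  have htip : joukowski ((1 + d : ℝ) : ℂ) = 4 * Real.exp c := by
    have : 1 + d + 2 + (1 + d)⁻¹ = 4 * Real.exp c := by
      rw [← hdc]
      field_simp
      ring
    rw [joukowski_ofReal, this]
    push_cast
    rfl
  rcases eq_or_mul_eq_one_of_joukowski_eq (ne_zero_of_mem_extDisc hw.1)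
    (ofReal_ne_zero.2 (by positivity)) (h.trans htip.symm) with h | h
  · exact hw.2 ⟨1 + d, by linarith, le_rfl, h⟩
  · have hn := congrArg norm h
    rw [norm_mul, norm_one, norm_real, Real.norm_of_nonneg (by linarith)] at hn
    have : (1 : ℝ) < ‖w‖ := hw.1
    nlinarith

namespace IsSlitMap

variable {c d : ℝ} {f : ℂ → ℂ}

theorem continuousOn (hf : IsSlitMap c d f) : ContinuousOn f {z | 1 ≤ ‖z‖} := hf.1

theorem differentiableOn (hf : IsSlitMap c d f) : DifferentiableOn ℂ f ExtDisc := hf.2.1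

theorem injOn (hf : IsSlitMap c d f) : InjOn f ExtDisc := hf.2.2.1

theorem image_eq (hf : IsSlitMap c d f) : f '' ExtDisc = ExtDisc \ radialSlit d := hf.2.2.2.1

theorem tendsto_div (hf : IsSlitMap c d f) :
    Tendsto (fun z => f z / z) (cobounded ℂ) (𝓝 (Real.exp c : ℂ)) := by
  simpa using hf.2.2.2.2

theorem mapsTo (hf : IsSlitMap c d f) : MapsTo f ExtDisc (ExtDisc \ radialSlit d) :=
  hf.image_eq ▸ mapsTo_image f ExtDisc

theorem isOpen_image (hf : IsSlitMap c d f) {V : Set ℂ} (hV : V ⊆ ExtDisc) (hVo : IsOpen V) :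
    IsOpen (f '' V) :=
  hf.differentiableOn.isOpen_image_of_injOn isOpen_extDisc hf.injOn hV hVo

theorem continuousOn_closure (hf : IsSlitMap c d f) : ContinuousOn f (closure ExtDisc) :=
  closure_extDisc ▸ hf.continuousOn

theorem mapsTo_closure (hf : IsSlitMap c d f) : MapsTo f (closure ExtDisc) (closure ExtDisc) :=
  fun z hz => closure_mono (hf.image_eq ▸ sdiff_subset) <|
    hf.continuousOn_closure.image_closure ⟨z, hz, rfl⟩

theorem apply_ne_zero (hf : IsSlitMap c d f) {z : ℂ} (hz : 1 ≤ ‖z‖) : f z ≠ 0 := by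
  intro h0
  have := hf.mapsTo_closure (show z ∈ closure ExtDisc by simpa [closure_extDisc] using hz)
  simp [closure_extDisc, h0] at this
  linarith

theorem im_joukowski_eq_zero (hf : IsSlitMap c d f) {z : ℂ} (hz : ‖z‖ = 1) :
    (joukowski (f z)).im = 0 := by
  have hzc : z ∈ closure ExtDisc := by simp [closure_extDisc, hz]
  have hnot : f z ∉ ExtDisc \ radialSlit d := hf.image_eq ▸
    apply_notMem_image_of_mem_closure isOpen_extDisc (fun _ => hf.isOpen_image) hf.injOn
      ((hf.continuousOn_closure z hzc).mono subset_closure) hzc (by simp [ExtDisc, hz])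
  have hfz : 1 ≤ ‖f z‖ := by simpa [closure_extDisc] using hf.mapsTo_closure hzc
  by_cases hfz' : f z ∈ ExtDisc
  · obtain ⟨x, -, -, hx⟩ := not_not.1 fun h => hnot ⟨hfz', h⟩
    simp [hx, joukowski_ofReal]
  · exact im_joukowski_of_norm_eq_one (le_antisymm (not_lt.1 hfz') hfz)

theorem tendsto_joukowski_sub_div (hf : IsSlitMap c d f) :
    Tendsto (fun z => (joukowski (f z) - Real.exp c * joukowski z) / z) (cobounded ℂ) (𝓝 0) := by
  have hlim := hf.tendsto_div
  have hE : (Real.exp c : ℂ) ≠ 0 := by exact_mod_cast (Real.exp_pos c).ne'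
  have hinv := tendsto_inv₀_cobounded (α := ℂ)
  have hfJ := hlim.add ((hinv.const_mul 2).add ((hlim.inv₀ hE).mul (hinv.pow 2)))
  have hJ := ((tendsto_const_nhds (x := (1 : ℂ))).add ((hinv.const_mul 2).add
    (hinv.pow 2))).const_mul (Real.exp c : ℂ)
  have := hfJ.sub hJ
  simp only [mul_zero, add_zero, zero_pow two_ne_zero, mul_one, sub_self] at this
  refine this.congr' ?_
  filter_upwards [eventually_ne_cobounded 0] with z hz
  simp only [joukowski]
  field_simp
  ring

theorem exists_joukowski_comp_eq_add (hf : IsSlitMap c d f) :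
    ∃ a : ℝ, ∀ z ∈ ExtDisc, joukowski (f z) = Real.exp c * joukowski z + a := by
  have hcont : ContinuousOn (fun z => joukowski (f z) - Real.exp c * joukowski z)
      {z | 1 ≤ ‖z‖} :=
    (differentiableOn_joukowski.continuousOn.comp hf.continuousOn fun _ hz =>
      hf.apply_ne_zero hz).sub (continuousOn_const.mul
        (differentiableOn_joukowski.continuousOn.mono fun z hz =>
          norm_pos_iff.1 (one_pos.trans_le hz)))
  have hdiff : DifferentiableOn ℂ (fun z => joukowski (f z) - Real.exp c * joukowski z)
      ExtDisc :=
    (differentiableOn_joukowski.comp hf.differentiableOn fun _ hz => hf.apply_ne_zero hz.le).sub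
      (differentiableOn_joukowski.const_mul _ |>.mono fun _ => ne_zero_of_mem_extDisc)
  obtain ⟨a, ha⟩ := exists_eq_ofReal_on_extDisc hcont hdiff
    (fun z hz => by simp [hf.im_joukowski_eq_zero hz, im_joukowski_of_norm_eq_one hz])
    hf.tendsto_joukowski_sub_div
  exact ⟨a, fun z hz => by rw [← ha z hz]; ring⟩

theorem joukowski_comp (hf : IsSlitMap c d f) (hd : 0 < d)
    (hdc : (d + 2) ^ 2 / (d + 1) = 4 * Real.exp c) {z : ℂ} (hz : z ∈ ExtDisc) :
    joukowski (f z) = Real.exp c * joukowski z := by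
  have hE : 0 < Real.exp c := Real.exp_pos c
  obtain ⟨a, hval⟩ := hf.exists_joukowski_comp_eq_add
  suffices a = 0 by simpa [this] using hval z hz
  rcases lt_trichotomy a 0 with ha0 | ha0 | ha0
  · obtain ⟨x, hx, hJx⟩ := exists_joukowski_eq (t := 4 - a / Real.exp c)
      (.inr (by have := div_neg_of_neg_of_pos ha0 hE; linarith))
    refine absurd ?_ (joukowski_ne_of_notMem_radialSlit hd hdc (hf.mapsTo hx))
    rw [hval x hx, hJx]
    push_cast
    field_simp
    ring
  · exact ha0
  · obtain ⟨x, hx, hJx⟩ := exists_joukowski_eq (t := -a / Real.exp c)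
      (.inl (div_neg_of_neg_of_pos (neg_neg_of_pos ha0) hE))
    refine absurd ?_ (joukowski_ne_zero (hf.mapsTo hx).1)
    rw [hval x hx, hJx]
    push_cast
    field_simp
    ring

theorem deriv_mul_one_sub_inv_sq (hf : IsSlitMap c d f) (hd : 0 < d)
    (hdc : (d + 2) ^ 2 / (d + 1) = 4 * Real.exp c) {z : ℂ} (hz : z ∈ ExtDisc) :
    deriv f z * (1 - (f z ^ 2)⁻¹) = Real.exp c * (1 - (z ^ 2)⁻¹) := by
  have hfd := (hf.differentiableOn.differentiableAt (isOpen_extDisc.mem_nhds hz)).hasDerivAt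
  have hcomp := (hasDerivAt_joukowski (ne_zero_of_mem_extDisc (hf.mapsTo hz).1)).comp z hfd
  have heq : joukowski ∘ f =ᶠ[𝓝 z] fun z => Real.exp c * joukowski z :=
    (isOpen_extDisc.eventually_mem hz).mono fun _ h => hf.joukowski_comp hd hdc h
  rw [mul_comm]
  exact hcomp.unique
    (((hasDerivAt_joukowski (ne_zero_of_mem_extDisc hz)).const_mul _).congr_of_eventuallyEq heq)

end IsSlitMap

theorem sq_add_one_sub_ne_zero {E w z : ℂ} (hE : E ≠ 0) (hw : w ≠ 0) (hz : z ≠ 0) (hz1 : z ≠ 1)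
    (hJ : joukowski w = E * joukowski z) : (w + 1) ^ 2 - 4 * E * w ≠ 0 := by
  have hQ : z * ((w + 1) ^ 2 - 4 * E * w) = E * w * (z - 1) ^ 2 := by
    unfold joukowski at hJ
    field_simp at hJ
    linear_combination hJ
  intro h
  rw [h, mul_zero, eq_comm] at hQ
  simp [hE, hw, sub_eq_zero, hz1] at hQ

theorem sq_mul_eq_of_joukowski_eq {E w z f' g' : ℂ} (hE : E ≠ 0) (hw : w ≠ 0) (hz : z ≠ 0)
    (hz1 : z ^ 2 ≠ 1) (hJ : joukowski w = E * joukowski z)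
    (hf' : f' * (1 - (w ^ 2)⁻¹) = E * (1 - (z ^ 2)⁻¹)) (hgf : g' * f' = 1) :
    g' ^ 2 * ((w + 1) ^ 2 - 4 * E * w) = (z / w * (w - 1)) ^ 2 := by
  have hJ' : z * (w + 1) ^ 2 = E * w * (z + 1) ^ 2 := by
    unfold joukowski at hJ
    field_simp at hJ
    linear_combination hJ
  have hg : g' = (w ^ 2 - 1) * z ^ 2 / (E * (z ^ 2 - 1) * w ^ 2) := by
    rw [eq_div_iff (by simp [hE, sub_ne_zero.2 hz1, hw])]
    field_simp at hf'
    linear_combination (w ^ 2 - 1) * z ^ 2 * hgf - g' * hf'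
  rw [hg]
  field_simp
  linear_combination (w - 1) ^ 2 * (E * w * (z - 1) ^ 2 + (w + 1) ^ 2 * z) * hJ'

theorem eq_div_sqrt_of_sq_mul_eq {a b r : ℝ} (ha : 0 ≤ a) (hb : 0 < b) (hr : 0 ≤ r)
    (h : a ^ 2 * b = r ^ 2) : a = r / √b := by
  rw [eq_div_iff (Real.sqrt_pos.2 hb).ne', ← Real.sqrt_sq ha, ← Real.sqrt_mul (sq_nonneg a), h,
    Real.sqrt_sq hr]

theorem slit_map_inverse_derivative_formula_general
    (c d : ℝ) (f g : ℂ → ℂ)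
    (hd0 : 0 < d) (hdc : (d + 2) ^ 2 / (d + 1) = 4 * Real.exp c)
    (hf : IsSlitMap c d f)
    (hg : DifferentiableOn ℂ g (f '' ExtDisc))
    (hginv : ∀ z ∈ ExtDisc, g (f z) = z) :
    ∀ w ∈ f '' ExtDisc,
      ‖deriv g w‖ =
        ‖g w‖ / ‖w‖ * ‖w - 1‖ /
          Real.sqrt (‖(w + 1) ^ 2 - 4 * (Real.exp c : ℂ) * w‖) := by
  rintro _ ⟨z, hz, rfl⟩
  have hE : (Real.exp c : ℂ) ≠ 0 := ofReal_ne_zero.2 (Real.exp_pos c).ne'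
  have hw := ne_zero_of_mem_extDisc (hf.mapsTo hz).1
  have hz0 := ne_zero_of_mem_extDisc hz
  have hJ := hf.joukowski_comp hd0 hdc hz
  have hgf : deriv g (f z) * deriv f z = 1 :=
    deriv_comp_mul_deriv_eq_one ((isOpen_extDisc.eventually_mem hz).mono hginv)
      (hg.differentiableAt ((hf.isOpen_image subset_rfl isOpen_extDisc).mem_nhds ⟨z, hz, rfl⟩))
      (hf.differentiableOn.differentiableAt (isOpen_extDisc.mem_nhds hz))
  have hsq := congrArg norm <| sq_mul_eq_of_joukowski_eq hE hw hz0 (sq_ne_one_of_mem_extDisc hz)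
    hJ (hf.deriv_mul_one_sub_inv_sq hd0 hdc hz) hgf
  rw [hginv z hz]
  refine eq_div_sqrt_of_sq_mul_eq (norm_nonneg _) (norm_pos_iff.2 ?_) (by positivity) ?_
  · exact sq_add_one_sub_ne_zero hE hw hz0 (fun h => sq_ne_one_of_mem_extDisc hz (by simp [h])) hJ
  · simpa [norm_mul, norm_div, norm_pow] using hsq

/-- Explicit formula for the modulus of the derivative of the inverse slit map:
`|g'(w)| = (|g(w)|/|w|)·|w−1| / |(w+1)² − 4e^c w|^{1/2}` on `f(Δ)`. -/
theorem slit_map_inverse_derivative_formula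
    (c d : ℝ) (f g : ℂ → ℂ)
    (hc0 : 0 < c) (hc1 : c < 1)
    (hd0 : 0 < d) (hdc : (d + 2) ^ 2 / (d + 1) = 4 * Real.exp c)
    (hf : IsSlitMap c d f)
    (hg : DifferentiableOn ℂ g (f '' ExtDisc))
    (hginv : ∀ z ∈ ExtDisc, g (f z) = z) :
    ∀ w ∈ f '' ExtDisc,
      ‖deriv g w‖ =
        ‖g w‖ / ‖w‖ * ‖w - 1‖ /
          Real.sqrt (‖(w + 1) ^ 2 - 4 * (Real.exp c : ℂ) * w‖) :=
  slit_map_inverse_derivative_formula_general c d f g hd0 hdc hf hg hginv
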